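/- (Lipschitz property of the exposed-ball count) In a balls-and-bins process where balls $a_1, \ldots, a_\ell$ have independent uniform bin choices $\alpha_1, \ldots, \alpha_\ell \in [n]$, and a ball is 'exposed' if at its last insertion time its bin already contained at least $h + \tau$ balls, changing the bin choice $\alpha_i$ of a single ball changes the final number of exposed balls by at most $h + \tau + 1$. -/
import Mathlib


/-- State of the balls-and-bins process: the set of present balls and the set of
(present) exposed balls. -/
structure BallState (ℓ : ℕ) where
  present : Finset (Fin ℓ)
  exposed : Finset (Fin ℓ)

/-- One step of the process: `.inl j` inserts ball `j` (it becomes exposed iff its bin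
already contains at least `h + τ` present balls), `.inr j` deletes ball `j`. Exposure is
(re)determined at each insertion and persists until deletion. -/
def ballStep {n ℓ : ℕ} (h τ : ℕ) (α : Fin ℓ → Fin n)
    (st : BallState ℓ) : (Fin ℓ ⊕ Fin ℓ) → BallState ℓ
  | Sum.inl j =>
      let cnt := ((st.present.erase j).filter fun j' => α j' = α j).card
      { present := insert j st.present
        exposed := if h + τ ≤ cnt then insert j st.exposed else st.exposed.erase j }
  | Sum.inr j => { present := st.present.erase j, exposed := st.exposed.erase j }

/-- The number of exposed balls at the end of the operation sequence `w`, starting from the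
empty system, with bin choices `α`. -/
def exposedCount {n ℓ : ℕ} (h τ : ℕ) (α : Fin ℓ → Fin n)
    (w : List (Fin ℓ ⊕ Fin ℓ)) : ℕ :=
  (w.foldl (ballStep h τ α) ⟨∅, ∅⟩).exposed.card

namespace Aux

variable {n ℓ : ℕ}

/-- Present-but-unexposed balls in bin `c`. -/
def unexp (β : Fin ℓ → Fin n) (st : BallState ℓ) (c : Fin n) : Finset (Fin ℓ) :=
  (st.present \ st.exposed).filter fun j => β j = c

/-- Single-run invariant. -/
def Good (h τ : ℕ) (β : Fin ℓ → Fin n) (st : BallState ℓ) : Prop :=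
  st.exposed ⊆ st.present ∧ ∀ c, (unexp β st c).card ≤ h + τ

lemma good_step {h τ : ℕ} {β : Fin ℓ → Fin n} {st : BallState ℓ}
    (hst : Good h τ β st) (op : Fin ℓ ⊕ Fin ℓ) : Good h τ β (ballStep h τ β st op) := by
  obtain ⟨hsub, hcnt⟩ := hst
  cases op with
  | inr j =>
    refine ⟨fun x hx => ?_, fun c => ?_⟩
    · simp only [ballStep, Finset.mem_erase] at hx ⊢
      exact ⟨hx.1, hsub hx.2⟩
    · refine le_trans (Finset.card_le_card ?_) (hcnt c)
      intro x hx
      simp only [unexp, ballStep, Finset.mem_filter, Finset.mem_sdiff, Finset.mem_erase] at hx ⊢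
      exact ⟨⟨hx.1.1.2, fun hh => hx.1.2 ⟨hx.1.1.1, hh⟩⟩, hx.2⟩
  | inl j =>
    by_cases hth : h + τ ≤ ((st.present.erase j).filter fun j' => β j' = β j).card
    · refine ⟨fun x hx => ?_, fun c => ?_⟩
      · simp only [ballStep, if_pos hth, Finset.mem_insert] at hx ⊢
        exact hx.imp id fun hh => hsub hh
      · refine le_trans (Finset.card_le_card ?_) (hcnt c)
        intro x hx
        simp only [unexp, ballStep, if_pos hth, Finset.mem_filter, Finset.mem_sdiff,
          Finset.mem_insert] at hx ⊢
        have hxj : x ≠ j := fun hh => hx.1.2 (Or.inl hh)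
        refine ⟨⟨hx.1.1.resolve_left hxj, fun hh => hx.1.2 (Or.inr hh)⟩, hx.2⟩
    · refine ⟨fun x hx => ?_, fun c => ?_⟩
      · simp only [ballStep, if_neg hth, Finset.mem_erase, Finset.mem_insert] at hx ⊢
        exact Or.inr (hsub hx.2)
      · by_cases hc : β j = c
        · -- bin of j : unexposed balls other than j sit in the old count `cnt < h+τ`
          have hsubset : (unexp β (ballStep h τ β st (Sum.inl j)) c) ⊆
              insert j ((st.present.erase j).filter fun j' => β j' = β j) := by
            intro x hx
            simp only [unexp, ballStep, if_neg hth, Finset.mem_filter, Finset.mem_sdiff,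
              Finset.mem_insert, Finset.mem_erase] at hx ⊢
            by_cases hxj : x = j
            · exact Or.inl hxj
            · exact Or.inr ⟨⟨hxj, hx.1.1.resolve_left hxj⟩, hx.2.trans hc.symm⟩
          calc (unexp β (ballStep h τ β st (Sum.inl j)) c).card
              ≤ _ := Finset.card_le_card hsubset
            _ ≤ ((st.present.erase j).filter fun j' => β j' = β j).card + 1 :=
                Finset.card_insert_le _ _
            _ ≤ h + τ := by omega
        · refine le_trans (Finset.card_le_card ?_) (hcnt c)
          intro x hx
          simp only [unexp, ballStep, if_neg hth, Finset.mem_filter, Finset.mem_sdiff,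
            Finset.mem_insert, Finset.mem_erase] at hx ⊢
          have hxj : x ≠ j := fun hh => hc (hh ▸ hx.2)
          exact ⟨⟨hx.1.1.resolve_left hxj, fun hh => hx.1.2 ⟨hxj, hh⟩⟩, hx.2⟩

variable {h τ : ℕ} {α : Fin ℓ → Fin n} {i : Fin ℓ} {b' : Fin n}

/-- Pair invariant between the run with `Function.update α i b'` and the run with `α`. -/
structure PairInv (h τ : ℕ) (α : Fin ℓ → Fin n) (i : Fin ℓ) (b' : Fin n)
    (st₁ st₂ : BallState ℓ) : Prop where
  g1 : Good h τ (Function.update α i b') st₁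
  g2 : Good h τ α st₂
  pres : st₁.present = st₂.present
  e6 : ∀ j, j ≠ i → α j = b' → j ∈ st₂.exposed → j ∈ st₁.exposed
  e7 : ∀ j, j ≠ i → α j = α i → j ∈ st₁.exposed → j ∈ st₂.exposed
  e8 : ∀ j, j ≠ i → α j ≠ α i → α j ≠ b' → (j ∈ st₁.exposed ↔ j ∈ st₂.exposed)

lemma pairInv_init : PairInv h τ α i b' ⟨∅, ∅⟩ ⟨∅, ∅⟩ := by
  constructor <;>
    simp [Good, unexp, Finset.filter_eq_empty_iff]

lemma pairInv_step {st₁ st₂ : BallState ℓ} (hp : PairInv h τ α i b' st₁ st₂)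
    (op : Fin ℓ ⊕ Fin ℓ) :
    PairInv h τ α i b' (ballStep h τ (Function.update α i b') st₁ op)
      (ballStep h τ α st₂ op) := by
  set α' := Function.update α i b' with hα'
  have hg1 := good_step hp.g1 op
  have hg2 := good_step hp.g2 op
  cases op with
  | inr j =>
    refine ⟨hg1, hg2, by simp [ballStep, hp.pres], ?_, ?_, ?_⟩
    · intro x hxi hxb hx
      simp only [ballStep, Finset.mem_erase] at hx ⊢
      exact ⟨hx.1, hp.e6 x hxi hxb hx.2⟩
    · intro x hxi hxb hx
      simp only [ballStep, Finset.mem_erase] at hx ⊢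
      exact ⟨hx.1, hp.e7 x hxi hxb hx.2⟩
    · intro x hxi hx1 hx2
      simp only [ballStep, Finset.mem_erase]
      rw [hp.e8 x hxi hx1 hx2]
  | inl j =>
    -- counts in the two runs
    set c₁ := ((st₁.present.erase j).filter fun j' => α' j' = α' j).card with hc₁
    set c₂ := ((st₂.present.erase j).filter fun j' => α j' = α j).card with hc₂
    have hmem1 : ∀ x, x ∈ (ballStep h τ α' st₁ (Sum.inl j)).exposed ↔
        (if h + τ ≤ c₁ then x = j ∨ x ∈ st₁.exposed else x ≠ j ∧ x ∈ st₁.exposed) := by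
      intro x
      simp only [ballStep, ← hc₁]
      split <;> simp
    have hmem2 : ∀ x, x ∈ (ballStep h τ α st₂ (Sum.inl j)).exposed ↔
        (if h + τ ≤ c₂ then x = j ∨ x ∈ st₂.exposed else x ≠ j ∧ x ∈ st₂.exposed) := by
      intro x
      simp only [ballStep, ← hc₂]
      split <;> simp
    have hpres : (ballStep h τ α' st₁ (Sum.inl j)).present =
        (ballStep h τ α st₂ (Sum.inl j)).present := by
      simp only [ballStep, hp.pres]
    -- count comparison lemmas for j ≠ i
    have hα'ne : ∀ x ≠ i, α' x = α x := fun x hx => Function.update_of_ne hx _ _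
    have hα'i : α' i = b' := Function.update_self _ _ _
    refine ⟨hg1, hg2, hpres, ?_, ?_, ?_⟩
    · -- α x = b' : c₂ ≤ c₁
      intro x hxi hxb
      rw [hmem1 x, hmem2 x]
      by_cases hxj : x = j
      · subst hxj
        have hle : c₂ ≤ c₁ := by
          rw [hc₁, hc₂, hp.pres]
          refine Finset.card_le_card fun y hy => ?_
          simp only [Finset.mem_filter, Finset.mem_erase] at hy ⊢
          refine ⟨hy.1, ?_⟩
          rw [hα'ne x hxi, hxb]
          by_cases hyi : y = i
          · rw [hyi, hα'i]
          · rw [hα'ne y hyi, hy.2, hxb]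
        by_cases h2 : h + τ ≤ c₂
        · rw [if_pos h2, if_pos (h2.trans hle)]
          intro _; exact Or.inl rfl
        · rw [if_neg h2]
          rintro ⟨hne, _⟩; exact absurd rfl hne
      · -- membership unchanged for x ≠ j
        have l1 : (if h + τ ≤ c₁ then x = j ∨ x ∈ st₁.exposed else x ≠ j ∧ x ∈ st₁.exposed)
            ↔ x ∈ st₁.exposed := by split <;> simp [hxj]
        have l2 : (if h + τ ≤ c₂ then x = j ∨ x ∈ st₂.exposed else x ≠ j ∧ x ∈ st₂.exposed)
            ↔ x ∈ st₂.exposed := by split <;> simp [hxj]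
        rw [l1, l2]
        exact hp.e6 x hxi hxb
    · -- α x = α i : c₁ ≤ c₂
      intro x hxi hxb
      rw [hmem1 x, hmem2 x]
      by_cases hxj : x = j
      · subst hxj
        have hle : c₁ ≤ c₂ := by
          rw [hc₁, hc₂, hp.pres]
          refine Finset.card_le_card fun y hy => ?_
          simp only [Finset.mem_filter, Finset.mem_erase] at hy ⊢
          refine ⟨hy.1, ?_⟩
          have hy2 := hy.2
          rw [hα'ne x hxi] at hy2
          by_cases hyi : y = i
          · rw [hyi]; exact hxb.symm
          · rw [hα'ne y hyi] at hy2; rw [hy2]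
        by_cases h1 : h + τ ≤ c₁
        · rw [if_pos h1, if_pos (h1.trans hle)]
          intro _; exact Or.inl rfl
        · rw [if_neg h1]
          rintro ⟨hne, _⟩; exact absurd rfl hne
      · have l1 : (if h + τ ≤ c₁ then x = j ∨ x ∈ st₁.exposed else x ≠ j ∧ x ∈ st₁.exposed)
            ↔ x ∈ st₁.exposed := by split <;> simp [hxj]
        have l2 : (if h + τ ≤ c₂ then x = j ∨ x ∈ st₂.exposed else x ≠ j ∧ x ∈ st₂.exposed)
            ↔ x ∈ st₂.exposed := by split <;> simp [hxj]
        rw [l1, l2]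
        exact hp.e7 x hxi hxb
    · -- other bins: c₁ = c₂
      intro x hxi hx1 hx2
      rw [hmem1 x, hmem2 x]
      by_cases hxj : x = j
      · subst hxj
        have heq : c₁ = c₂ := by
          rw [hc₁, hc₂, hp.pres]
          congr 1
          apply Finset.filter_congr
          intro y hy
          simp only [Finset.mem_erase] at hy
          rw [hα'ne x hxi]
          by_cases hyi : y = i
          · subst hyi
            rw [hα'i]
            constructor
            · intro hh; exact absurd hh.symm hx2
            · intro hh; exact absurd hh.symm hx1
          · rw [hα'ne y hyi]
        rw [heq]
        split <;> simp [hp.e8 x hxi hx1 hx2]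
      · have l1 : (if h + τ ≤ c₁ then x = j ∨ x ∈ st₁.exposed else x ≠ j ∧ x ∈ st₁.exposed)
            ↔ x ∈ st₁.exposed := by split <;> simp [hxj]
        have l2 : (if h + τ ≤ c₂ then x = j ∨ x ∈ st₂.exposed else x ≠ j ∧ x ∈ st₂.exposed)
            ↔ x ∈ st₂.exposed := by split <;> simp [hxj]
        rw [l1, l2]
        exact hp.e8 x hxi hx1 hx2

lemma pairInv_fold (h τ : ℕ) (α : Fin ℓ → Fin n) (i : Fin ℓ) (b' : Fin n)
    (w : List (Fin ℓ ⊕ Fin ℓ)) :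
    PairInv h τ α i b' (w.foldl (ballStep h τ (Function.update α i b')) ⟨∅, ∅⟩)
      (w.foldl (ballStep h τ α) ⟨∅, ∅⟩) := by
  induction w using List.reverseRecOn with
  | nil => exact pairInv_init
  | append_singleton w op ih =>
    simp only [List.foldl_append, List.foldl_cons, List.foldl_nil]
    exact pairInv_step ih op

end Aux

/-- Lipschitz property of the exposed-ball count: changing the bin choice of a single ball
changes the final number of exposed balls by at most `h + τ + 1`. -/
theorem stmt_11 (n ℓ h τ : ℕ) (hn : 0 < n) (α : Fin ℓ → Fin n)
    (w : List (Fin ℓ ⊕ Fin ℓ)) (i : Fin ℓ) (b' : Fin n) :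
    |(exposedCount h τ (Function.update α i b') w : ℤ) - (exposedCount h τ α w : ℤ)| ≤
      h + τ + 1 := by
  classical
  set α' := Function.update α i b' with hα'
  set st₁ := w.foldl (ballStep h τ α') ⟨∅, ∅⟩ with hst₁
  set st₂ := w.foldl (ballStep h τ α) ⟨∅, ∅⟩ with hst₂
  have hp : Aux.PairInv h τ α i b' st₁ st₂ := Aux.pairInv_fold h τ α i b' w
  have hα'ne : ∀ x ≠ i, α' x = α x := fun x hx => Function.update_of_ne hx _ _
  -- difference sets
  have hd1 : st₁.exposed \ st₂.exposed ⊆ insert i (Aux.unexp α st₂ b') := by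
    intro x hx
    simp only [Finset.mem_sdiff] at hx
    by_cases hxi : x = i
    · simp [hxi]
    · have hxb : α x = b' := by
        by_contra hxb
        by_cases hxa : α x = α i
        · exact hx.2 (hp.e7 x hxi hxa hx.1)
        · exact hx.2 ((hp.e8 x hxi hxa hxb).1 hx.1)
      refine Finset.mem_insert_of_mem ?_
      simp only [Aux.unexp, Finset.mem_filter, Finset.mem_sdiff]
      exact ⟨⟨hp.pres ▸ hp.g1.1 hx.1, hx.2⟩, hxb⟩
  have hd2 : st₂.exposed \ st₁.exposed ⊆ insert i (Aux.unexp α' st₁ (α i)) := by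
    intro x hx
    simp only [Finset.mem_sdiff] at hx
    by_cases hxi : x = i
    · simp [hxi]
    · have hxa : α x = α i := by
        by_contra hxa
        by_cases hxb : α x = b'
        · exact hx.2 (hp.e6 x hxi hxb hx.1)
        · exact hx.2 ((hp.e8 x hxi hxa hxb).2 hx.1)
      refine Finset.mem_insert_of_mem ?_
      simp only [Aux.unexp, Finset.mem_filter, Finset.mem_sdiff]
      exact ⟨⟨hp.pres ▸ hp.g2.1 hx.1, hx.2⟩, (hα'ne x hxi).trans hxa⟩
  have hb1 : (st₁.exposed \ st₂.exposed).card ≤ h + τ + 1 :=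
    (Finset.card_le_card hd1).trans ((Finset.card_insert_le _ _).trans
      (by have := hp.g2.2 b'; omega))
  have hb2 : (st₂.exposed \ st₁.exposed).card ≤ h + τ + 1 :=
    (Finset.card_le_card hd2).trans ((Finset.card_insert_le _ _).trans
      (by have := hp.g1.2 (α i); rw [← hα'] at this; omega))
  have h1 : st₁.exposed.card ≤ st₂.exposed.card + (h + τ + 1) := by
    have := Finset.card_le_card_sdiff_add_card (s := st₁.exposed) (t := st₂.exposed)
    omega
  have h2 : st₂.exposed.card ≤ st₁.exposed.card + (h + τ + 1) := by
    have := Finset.card_le_card_sdiff_add_card (s := st₂.exposed) (t := st₁.exposed)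
    omega
  have e1 : exposedCount h τ α' w = st₁.exposed.card := rfl
  have e2 : exposedCount h τ α w = st₂.exposed.card := rfl
  rw [abs_le, e1, e2]
  constructor <;> omega
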